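/- For α > 0 (with α^{1/2} = √α real) and ν > 0, the polynomial I_n admits the integral representation I_n(z,w|ξ) = (1/(απ))^{1/2} · 2^n · ∫_ℝ t^n · exp( -(1/(4α)) · (2t - I_1)² ) dt, where I_1 = νw - 2αz - ξ, valid for all complex z, w, ξ (the Gaussian integral of a complex-shifted Gaussian). -/

import Mathlib

open Complex

noncomputable def Ic (ν α ξ z w : ℂ) : ℕ → ℂ
  | 0 => 1
  | 1 => ν * w - 2 * α * z - ξ
  | (n + 2) => (ν * w - 2 * α * z - ξ) * Ic ν α ξ z w (n + 1)
      + 2 * α * (n + 1) * Ic ν α ξ z w n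

open MeasureTheory

/-!
Write `M n = ∫ tⁿ exp(-(2t - C)² / (4α)) dt` with `C = I₁`. Integrating the derivative of
`tᵐ exp(-(2t - C)² / (4α))` over ℝ gives `2 M (m + 1) = C M m + α m M (m - 1)`, and the complex-shifted
Gaussian integral gives `M 0 = √(απ)`. Hence `(απ)^(-1/2) 2ⁿ M n` starts with `1, I₁` and satisfies
the three-term recurrence defining `I_n`.
-/

lemma abs_pow_le_factorial_mul_exp_add_exp_neg (t : ℝ) (n : ℕ) :
    |t| ^ n ≤ n.factorial * (Real.exp t + Real.exp (-t)) := by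
  have h := Real.pow_div_factorial_le_exp _ (abs_nonneg t) n
  rw [div_le_iff₀ (by positivity)] at h
  nlinarith [Real.exp_abs_le t, (by positivity : (0 : ℝ) < n.factorial)]

noncomputable def gaussianMoment (b c d : ℂ) (n : ℕ) : ℂ :=
  ∫ t : ℝ, (t : ℂ) ^ n * Complex.exp (b * t ^ 2 + c * t + d)

lemma integrable_pow_mul_cexp_quadratic {b : ℂ} (hb : b.re < 0) (c d : ℂ) (n : ℕ) :
    Integrable fun t : ℝ => (t : ℂ) ^ n * Complex.exp (b * t ^ 2 + c * t + d) := by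
  have htilt (s : ℝ) :
      Integrable fun t : ℝ => ‖Complex.exp (b * t ^ 2 + c * t + d)‖ * Real.exp (s * t) := by
    refine (integrable_cexp_quadratic' hb (c + s) d).norm.congr (.of_forall fun t => ?_)
    dsimp only
    rw [show b * t ^ 2 + (c + s) * t + d = b * t ^ 2 + c * t + d + (s * t : ℝ) by push_cast; ring,
      Complex.exp_add, norm_mul, Complex.norm_exp_ofReal]
  refine (((htilt 1).add (htilt (-1))).const_mul n.factorial).mono' (by fun_prop)
    (.of_forall fun t => ?_)
  rw [norm_mul, norm_pow, Complex.norm_real, Real.norm_eq_abs, mul_comm]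
  refine (mul_le_mul_of_nonneg_left (abs_pow_le_factorial_mul_exp_add_exp_neg t n)
    (norm_nonneg _)).trans_eq ?_
  simp only [Pi.add_apply, one_mul, neg_one_mul]
  ring

lemma hasDerivAt_pow_mul_cexp_quadratic (b c d : ℂ) (m : ℕ) (t : ℝ) :
    HasDerivAt (fun t : ℝ => (t : ℂ) ^ m * Complex.exp (b * t ^ 2 + c * t + d))
      (m * (t : ℂ) ^ (m - 1) * Complex.exp (b * t ^ 2 + c * t + d) +
        (t : ℂ) ^ m * ((2 * b * t + c) * Complex.exp (b * t ^ 2 + c * t + d))) t := by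
  have hq : HasDerivAt (fun z : ℂ => b * z ^ 2 + c * z + d) (2 * b * t + c) t := by
    refine ((((hasDerivAt_pow 2 (t : ℂ)).const_mul b).add
      ((hasDerivAt_id (t : ℂ)).const_mul c)).add_const d).congr_deriv ?_
    push_cast
    ring
  exact ((hasDerivAt_pow m (t : ℂ)).comp_ofReal).mul
    ((hq.cexp.comp_ofReal).congr_deriv (mul_comm _ _))

theorem gaussianMoment_zero {b : ℂ} (hb : b.re < 0) (c d : ℂ) :
    gaussianMoment b c d 0 = (Real.pi / -b) ^ (1 / 2 : ℂ) * Complex.exp (d - c ^ 2 / (4 * b)) := by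
  simp only [gaussianMoment, pow_zero, one_mul, integral_cexp_quadratic hb]

/-- Integration by parts with no boundary terms, since `tᵐ exp(b t² + c t + d)` and its derivative
are integrable. For `m = 0` the truncated `m - 1` is harmless: its coefficient is `0`. -/
theorem gaussianMoment_succ {b : ℂ} (hb : b.re < 0) (c d : ℂ) (m : ℕ) :
    2 * b * gaussianMoment b c d (m + 1) =
      -(c * gaussianMoment b c d m) - m * gaussianMoment b c d (m - 1) := by
  set g : ℕ → ℝ → ℂ := fun k t => (t : ℂ) ^ k * Complex.exp (b * t ^ 2 + c * t + d)
  have hg (k : ℕ) : Integrable (g k) := integrable_pow_mul_cexp_quadratic hb c d k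
  have hderiv (t : ℝ) : HasDerivAt (g m) (m * g (m - 1) t + (2 * b * g (m + 1) t + c * g m t)) t :=
    (hasDerivAt_pow_mul_cexp_quadratic b c d m t).congr_deriv (by simp only [g]; ring)
  have htail : Integrable fun t => 2 * b * g (m + 1) t + c * g m t :=
    ((hg _).const_mul _).add ((hg _).const_mul _)
  have h := integral_eq_zero_of_hasDerivAt_of_integrable hderiv
    (((hg _).const_mul _).add htail) (hg m)
  rw [integral_add ((hg _).const_mul _) htail, integral_add ((hg _).const_mul _) ((hg _).const_mul _),
    integral_const_mul, integral_const_mul, integral_const_mul] at h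
  simp only [gaussianMoment]
  linear_combination h

noncomputable def shiftedGaussianMoment (α C : ℂ) (n : ℕ) : ℂ :=
  ∫ t : ℝ, (t : ℂ) ^ n * Complex.exp (-(1 / (4 * α)) * (2 * t - C) ^ 2)

theorem shiftedGaussianMoment_eq_gaussianMoment {α : ℂ} (hα : α ≠ 0) (C : ℂ) :
    shiftedGaussianMoment α C = gaussianMoment (-α⁻¹) (C / α) (-(C ^ 2 / (4 * α))) := by
  ext n
  simp only [shiftedGaussianMoment, gaussianMoment]
  congr! 4 with t
  field_simp
  ring

theorem shiftedGaussianMoment_zero {α : ℝ} (hα : 0 < α) (C : ℂ) :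
    shiftedGaussianMoment α C 0 = √(α * Real.pi) := by
  have hα0 : (α : ℂ) ≠ 0 := by exact_mod_cast hα.ne'
  have hb : (-(α : ℂ)⁻¹).re < 0 := by simpa using hα
  have hexp : -(C ^ 2 / (4 * α)) - (C / α) ^ 2 / (4 * -(α : ℂ)⁻¹) = 0 := by
    field_simp
    ring
  have hbase : (Real.pi : ℂ) / -(-(α : ℂ)⁻¹) = ((α * Real.pi : ℝ) : ℂ) := by
    push_cast
    field_simp
  rw [shiftedGaussianMoment_eq_gaussianMoment hα0, gaussianMoment_zero hb, hexp, Complex.exp_zero,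
    mul_one, hbase, Real.sqrt_eq_rpow, Complex.ofReal_cpow (by positivity)]
  norm_num

theorem shiftedGaussianMoment_succ {α : ℂ} (hα : 0 < α.re) (C : ℂ) (m : ℕ) :
    2 * shiftedGaussianMoment α C (m + 1) =
      C * shiftedGaussianMoment α C m + α * m * shiftedGaussianMoment α C (m - 1) := by
  have hα0 : α ≠ 0 := by rintro rfl; simp at hα
  have hb : (-α⁻¹).re < 0 := by
    rw [Complex.neg_re, Complex.inv_re, neg_lt_zero]
    exact div_pos hα (Complex.normSq_pos.mpr hα0)
  have h := gaussianMoment_succ hb (C / α) (-(C ^ 2 / (4 * α))) m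
  rw [shiftedGaussianMoment_eq_gaussianMoment hα0]
  generalize gaussianMoment (-α⁻¹) (C / α) (-(C ^ 2 / (4 * α))) = M at h ⊢
  field_simp at h
  linear_combination -h

theorem Ic_eq_of_recurrence {ν α ξ z w : ℂ} (P : ℕ → ℂ) (h0 : P 0 = 1)
    (h1 : P 1 = ν * w - 2 * α * z - ξ)
    (hrec : ∀ n : ℕ, P (n + 2) = (ν * w - 2 * α * z - ξ) * P (n + 1) + 2 * α * (n + 1) * P n) :
    ∀ n, Ic ν α ξ z w n = P n
  | 0 => h0.symm
  | 1 => h1.symm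
  | n + 2 => by
    rw [hrec, Ic, Ic_eq_of_recurrence P h0 h1 hrec n, Ic_eq_of_recurrence P h0 h1 hrec (n + 1)]

theorem stmt10 (ν ξ z w : ℂ) (α : ℝ) (hα : 0 < α) (n : ℕ) :
    Ic ν (α : ℂ) ξ z w n =
      ((Real.sqrt (1 / (α * Real.pi)) : ℝ) : ℂ) * 2 ^ n *
        ∫ t : ℝ, (t : ℂ) ^ n *
          Complex.exp (-(1 / (4 * (α : ℂ))) *
            (2 * (t : ℂ) - (ν * w - 2 * (α : ℂ) * z - ξ)) ^ 2) := by
  set C := ν * w - 2 * (α : ℂ) * z - ξ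
  set K : ℂ := ((√(1 / (α * Real.pi)) : ℝ) : ℂ)
  have hα' : 0 < (α : ℂ).re := by simpa using hα
  have h0 : K * shiftedGaussianMoment α C 0 = 1 := by
    rw [shiftedGaussianMoment_zero hα, ← Complex.ofReal_mul, ← Real.sqrt_mul (by positivity),
      one_div_mul_cancel (by positivity), Real.sqrt_one, Complex.ofReal_one]
  have h1 : 2 * shiftedGaussianMoment α C 1 = C * shiftedGaussianMoment α C 0 := by
    simpa using shiftedGaussianMoment_succ hα' C 0
  have hrec (m : ℕ) : 2 * shiftedGaussianMoment α C (m + 2) =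
      C * shiftedGaussianMoment α C (m + 1) + α * (m + 1) * shiftedGaussianMoment α C m := by
    simpa using shiftedGaussianMoment_succ hα' C (m + 1)
  refine Ic_eq_of_recurrence (fun k => K * 2 ^ k * shiftedGaussianMoment α C k)
    (by simpa using h0) ?_ (fun m => ?_) n
  · linear_combination K * h1 + C * h0
  · linear_combination K * 2 ^ (m + 1) * hrec m
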